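/- Let G be a finite connected acyclic graph with arcs I_1,…,I_m, and let v_i be a constant on each arc I_i. Suppose v_i = 0 on every external arc (arc incident to a boundary vertex), and at every inner node N the flux conservation Σ_{i incoming} λ_i v_i(N) = Σ_{i outgoing} λ_i v_i(N) holds with all λ_i > 0. Then v_i = 0 on every arc. -/

import Mathlib

open Finset

theorem stmt6 {V : Type*} [Fintype V] [DecidableEq V] {m : ℕ}
    (src tgt : Fin m → V) (hst : ∀ i, src i ≠ tgt i)
    (hinj : Function.Injective fun i => s(src i, tgt i))
    (G : SimpleGraph V) (hG : ∀ u w, G.Adj u w ↔ ∃ i, s(src i, tgt i) = s(u, w))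
    (hconn : G.Connected) (hacyc : G.IsAcyclic)
    (lam v : Fin m → ℝ) (hlam : ∀ i, 0 < lam i)
    (hext : ∀ i : Fin m,
      ((Finset.univ.filter fun j => src j = src i ∨ tgt j = src i).card = 1 ∨
       (Finset.univ.filter fun j => src j = tgt i ∨ tgt j = tgt i).card = 1) → v i = 0)
    (hflux : ∀ N : V,
      2 ≤ (Finset.univ.filter fun j => src j = N ∨ tgt j = N).card →
      ∑ i ∈ Finset.univ.filter (fun j => tgt j = N), lam i * v i
        = ∑ i ∈ Finset.univ.filter (fun j => src j = N), lam i * v i) :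
    ∀ i, v i = 0 := by
  classical
  -- conservation holds at every node
  have hcons : ∀ N : V,
      ∑ j ∈ Finset.univ.filter (fun j => tgt j = N), lam j * v j
        = ∑ j ∈ Finset.univ.filter (fun j => src j = N), lam j * v j := by
    intro N
    rcases le_or_gt 2 ((Finset.univ.filter fun j => src j = N ∨ tgt j = N).card) with h2 | h2
    · exact hflux N h2
    · -- degree ≤ 1: every incident arc is external hence has v = 0
      have hz : ∀ j : Fin m, (src j = N ∨ tgt j = N) → v j = 0 := by
        intro j hj
        have hdeg1 : (Finset.univ.filter fun k => src k = N ∨ tgt k = N).card = 1 := by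
          have h1 : 1 ≤ (Finset.univ.filter fun k => src k = N ∨ tgt k = N).card :=
            Finset.card_pos.mpr ⟨j, by simpa using hj⟩
          omega
        rcases hj with hj | hj
        · exact hext j (Or.inl (by rw [hj]; exact hdeg1))
        · exact hext j (Or.inr (by rw [hj]; exact hdeg1))
      rw [Finset.sum_eq_zero, Finset.sum_eq_zero]
      · intro j hj
        simp only [Finset.mem_filter] at hj
        rw [hz j (Or.inl hj.2), mul_zero]
      · intro j hj
        simp only [Finset.mem_filter] at hj
        rw [hz j (Or.inr hj.2), mul_zero]
  intro i
  set a := src i with ha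
  set b := tgt i with hb
  have hadj : G.Adj a b := (hG a b).2 ⟨i, rfl⟩
  set G' := G \ SimpleGraph.fromEdgeSet {s(a, b)} with hG'
  have hbridge : ¬ G'.Reachable a b :=
    ((SimpleGraph.isAcyclic_iff_forall_adj_isBridge.mp hacyc) hadj)
  set S : Finset V := Finset.univ.filter (fun u => G'.Reachable b u) with hS
  have hbS : b ∈ S := by
    simp only [hS, Finset.mem_filter, Finset.mem_univ, true_and]
    exact SimpleGraph.Reachable.refl b
  have haS : a ∉ S := by
    simp only [hS, Finset.mem_filter, Finset.mem_univ, true_and]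
    intro h
    exact hbridge h.symm
  -- arcs other than i don't cross S
  have hcross : ∀ j : Fin m, j ≠ i → (src j ∈ S ↔ tgt j ∈ S) := by
    intro j hj
    have hadj' : G'.Adj (src j) (tgt j) := by
      rw [hG', SimpleGraph.sdiff_adj, SimpleGraph.fromEdgeSet_adj]
      refine ⟨(hG _ _).2 ⟨j, rfl⟩, ?_⟩
      rintro ⟨he, -⟩
      exact hj (hinj (by simpa using he))
    simp only [hS, Finset.mem_filter, Finset.mem_univ, true_and]
    constructor
    · intro h; exact h.trans hadj'.reachable
    · intro h; exact h.trans hadj'.symm.reachable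
  -- sum conservation over S
  have key : ∑ j ∈ Finset.univ.filter (fun j => tgt j ∈ S), lam j * v j
      = ∑ j ∈ Finset.univ.filter (fun j => src j ∈ S), lam j * v j := by
    have h1 : ∑ j ∈ Finset.univ.filter (fun j => tgt j ∈ S), lam j * v j
        = ∑ N ∈ S, ∑ j ∈ Finset.univ.filter (fun j => tgt j = N), lam j * v j := by
      rw [← Finset.sum_fiberwise_of_maps_to (g := tgt) (t := S)
        (fun x hx => (Finset.mem_filter.mp hx).2) (fun j => lam j * v j)]
      refine Finset.sum_congr rfl fun N hN => Finset.sum_congr ?_ fun _ _ => rfl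
      ext j
      simp only [Finset.filter_filter, Finset.mem_filter, Finset.mem_univ, true_and]
      constructor
      · exact fun h => h.2
      · intro h
        subst h
        exact ⟨hN, rfl⟩
    have h2 : ∑ j ∈ Finset.univ.filter (fun j => src j ∈ S), lam j * v j
        = ∑ N ∈ S, ∑ j ∈ Finset.univ.filter (fun j => src j = N), lam j * v j := by
      rw [← Finset.sum_fiberwise_of_maps_to (g := src) (t := S)
        (fun x hx => (Finset.mem_filter.mp hx).2) (fun j => lam j * v j)]
      refine Finset.sum_congr rfl fun N hN => Finset.sum_congr ?_ fun _ _ => rfl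
      ext j
      simp only [Finset.filter_filter, Finset.mem_filter, Finset.mem_univ, true_and]
      constructor
      · exact fun h => h.2
      · intro h
        subst h
        exact ⟨hN, rfl⟩
    rw [h1, h2]
    exact Finset.sum_congr rfl fun N _ => hcons N
  -- the two index sets differ exactly by i
  have hT : Finset.univ.filter (fun j => src j ∈ S)
      = (Finset.univ.filter (fun j => tgt j ∈ S)).erase i := by
    ext j
    simp only [Finset.mem_erase, Finset.mem_filter, Finset.mem_univ, true_and]
    by_cases hj : j = i
    · subst hj
      simp [← ha, ← hb, haS, hbS]
    · rw [hcross j hj]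
      tauto
  have hiT : i ∈ Finset.univ.filter (fun j => tgt j ∈ S) := by
    simp [← hb, hbS]
  rw [hT, ← Finset.add_sum_erase _ _ hiT] at key
  have : lam i * v i = 0 := by linarith
  rcases mul_eq_zero.mp this with h | h
  · exact absurd h (ne_of_gt (hlam i))
  · exact h
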